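/- arXiv:1409.6413 — 7 statements merged into one kernel-verified Lean document; each statement's English description precedes it below -/
import Mathlib

section
/- Let M be a symmetric, homogeneous (of degree one), differentiable bivariate mean on (0,∞)², and let θ, θ* be fixed real numbers with θ + θ* = 1. Then lim_{x→∞} (x + 1/2)·ln( M(x+θ, x+θ*) / (x+1/2) ) = 0. -/
/-!
With `c = x + 1/2` and `d = (θ - θs)/2`, homogeneity gives `M (x + θ) (x + θs) / c = f (d / c)`
for `f u = M (1 + u) (1 - u)`. Symmetry makes `f` even, so `f' 0 = 0`, and `f 0 = M 1 1 = 1`;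
hence `log ∘ f` vanishes to first order at `0`, which is exactly `c * log (f (d / c)) → 0`.
-/

open Filter Real Set Asymptotics Topology

theorem deriv_zero_of_eventuallyEq_comp_neg {F : Type*} [NormedAddCommGroup F] [NormedSpace ℝ F]
    {f : ℝ → F} (heven : f =ᶠ[𝓝 0] fun u => f (-u)) : deriv f 0 = 0 := by
  have h : deriv f 0 = -deriv f 0 := by
    simpa using heven.deriv_eq.trans (deriv_comp_neg f 0)
  have h2 : (2 : ℝ) • deriv f 0 = 0 := by
    rw [two_smul]; nth_rewrite 1 [h]; exact neg_add_cancel _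
  exact (smul_eq_zero.mp h2).resolve_left two_ne_zero

theorem tendsto_mul_comp_div_atTop_of_hasDerivAt_zero {g : ℝ → ℝ} (hg : HasDerivAt g 0 0)
    (hg0 : g 0 = 0) (d : ℝ) : Tendsto (fun c => c * g (d / c)) atTop (𝓝 0) := by
  have hlo : (fun u => g u) =o[𝓝 0] fun u => u := by simpa [hg0] using hg.isLittleO
  have hdiv : Tendsto (fun c : ℝ => d / c) atTop (𝓝 0) := tendsto_id.const_div_atTop d
  have hscaled : (fun c : ℝ => c * g (d / c)) =o[atTop] fun c => c * (d / c) :=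
    (isBigO_refl _ _).mul_isLittleO (hlo.comp_tendsto hdiv)
  have hbounded : (fun c : ℝ => c * (d / c)) =O[atTop] fun _ => (1 : ℝ) := by
    refine (isBigO_const_one ℝ d atTop).congr' ?_ EventuallyEq.rfl
    filter_upwards [eventually_ne_atTop 0] with c hc
    field_simp
  exact (isLittleO_one_iff ℝ).mp (hscaled.trans_isBigO hbounded)

section Mean

variable {M : ℝ → ℝ → ℝ}

theorem mean_one_one (hmean : ∀ a > (0:ℝ), ∀ b > (0:ℝ), min a b ≤ M a b ∧ M a b ≤ max a b) :
    M 1 1 = 1 := by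
  obtain ⟨hge, hle⟩ := hmean 1 one_pos 1 one_pos
  rw [min_self] at hge
  rw [max_self] at hle
  exact le_antisymm hle hge

theorem hasDerivAt_mean_one_add_one_sub
    (hsymm : ∀ a > (0:ℝ), ∀ b > (0:ℝ), M a b = M b a)
    (hdiff : DifferentiableAt ℝ (fun p : ℝ × ℝ => M p.1 p.2) (1, 1)) :
    HasDerivAt (fun u => M (1 + u) (1 - u)) 0 0 := by
  have hline : DifferentiableAt ℝ (fun u : ℝ => ((1 + u, 1 - u) : ℝ × ℝ)) 0 := by fun_prop
  have hcomp : DifferentiableAt ℝ (fun u => M (1 + u) (1 - u)) 0 :=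
    DifferentiableAt.comp (g := fun p : ℝ × ℝ => M p.1 p.2) 0 (by rwa [add_zero, sub_zero]) hline
  have heven : (fun u => M (1 + u) (1 - u)) =ᶠ[𝓝 0] fun u => M (1 + -u) (1 - -u) := by
    filter_upwards [Ioo_mem_nhds (neg_lt_zero.mpr one_pos) one_pos] with u hu
    rw [hsymm _ (by linarith [hu.1]) _ (by linarith [hu.2])]
    ring_nf
  simpa [deriv_zero_of_eventuallyEq_comp_neg heven] using hcomp.hasDerivAt

theorem mean_add_sub_div_eq
    (hhom : ∀ t > (0:ℝ), ∀ a > (0:ℝ), ∀ b > (0:ℝ), M (t * a) (t * b) = t * M a b)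
    {c d : ℝ} (hdc : |d| < c) : M (c + d) (c - d) / c = M (1 + d / c) (1 - d / c) := by
  have hc : 0 < c := (abs_nonneg d).trans_lt hdc
  have hu : |d / c| < 1 := by rwa [abs_div, abs_of_pos hc, div_lt_one hc]
  have key := hhom c hc (1 + d / c) (by linarith [(abs_lt.mp hu).1])
    (1 - d / c) (by linarith [(abs_lt.mp hu).2])
  rw [mul_add, mul_sub, mul_one, mul_div_cancel₀ d hc.ne'] at key
  rw [key, mul_div_cancel_left₀ _ hc.ne']

end Mean

theorem D1_limit (M : ℝ → ℝ → ℝ)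
    (hmean : ∀ a > (0:ℝ), ∀ b > (0:ℝ), min a b ≤ M a b ∧ M a b ≤ max a b)
    (hsymm : ∀ a > (0:ℝ), ∀ b > (0:ℝ), M a b = M b a)
    (hhom : ∀ t > (0:ℝ), ∀ a > (0:ℝ), ∀ b > (0:ℝ), M (t * a) (t * b) = t * M a b)
    (hdiff : ∀ a > (0:ℝ), ∀ b > (0:ℝ), DifferentiableAt ℝ (fun p : ℝ × ℝ => M p.1 p.2) (a, b))
    (θ θs : ℝ) (hθ : θ + θs = 1) :
    Tendsto (fun x : ℝ => (x + 1 / 2) * Real.log (M (x + θ) (x + θs) / (x + 1 / 2)))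
      atTop (nhds 0) := by
  set d := (θ - θs) / 2 with hd
  have hM11 := mean_one_one hmean
  have hlog : HasDerivAt (fun u => Real.log (M (1 + u) (1 - u))) 0 0 := by
    simpa using (hasDerivAt_mean_one_add_one_sub hsymm (hdiff 1 one_pos 1 one_pos)).log
      (by simp [hM11])
  have hlim := (tendsto_mul_comp_div_atTop_of_hasDerivAt_zero hlog (by simp [hM11]) d).comp
    (tendsto_atTop_add_const_right atTop (1 / 2) tendsto_id)
  refine hlim.congr' ?_
  filter_upwards [eventually_gt_atTop |d|] with x hx
  have hθ' : x + θ = (x + 1 / 2) + d := by linarith [hd]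
  have hθs' : x + θs = (x + 1 / 2) - d := by linarith [hd]
  have hdx : |d| < x + 1 / 2 := by linarith
  simp only [Function.comp_apply, id, hθ', hθs', mean_add_sub_div_eq hhom hdx]
end

section
/- Let N be a symmetric, homogeneous (of degree one), differentiable bivariate mean on ℝ², and let σ, σ* be fixed real numbers with σ + σ* = 1. Then lim_{x→∞} ( N(x+σ, x+σ*) − (x + 1/2) ) = 0. -/
/-!
Homogeneity rewrites `N (x + σ) (x + σs)` as `x * g x⁻¹` with `g t = N (1 + σ t) (1 + σs t)`,
so the limit is the derivative of `g` at `0`, that is, the derivative of `N` at `(1, 1)` in the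
direction `(σ, σs)`. Symmetry makes that derivative a multiple of `σ + σs`, and `N t t = t` fixes
the multiple to `1 / 2`.
-/

open Filter Topology

section Derivative

variable {𝕜 : Type*} [NontriviallyNormedField 𝕜]

theorem HasFDerivAt.apply_swap_of_comp_swap {E F : Type*} [NormedAddCommGroup E]
    [NormedSpace 𝕜 E] [NormedAddCommGroup F] [NormedSpace 𝕜 F] {f : E × E → F}
    {L : E × E →L[𝕜] F} {a : E} (hf : ∀ p, f p.swap = f p) (hL : HasFDerivAt f L (a, a))
    (v : E × E) : L v.swap = L v := by
  have hswap : HasFDerivAt (f ∘ Prod.swap)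
      (L.comp (ContinuousLinearEquiv.prodComm 𝕜 E E : E × E →L[𝕜] E × E)) (a, a) :=
    hL.comp (a, a) (ContinuousLinearEquiv.prodComm 𝕜 E E).hasFDerivAt
  rw [show f ∘ Prod.swap = f from funext hf] at hswap
  exact (DFunLike.congr_fun (hL.unique hswap) v).symm

theorem HasFDerivAt.apply_one_one_of_diag_eq_id {f : 𝕜 × 𝕜 → 𝕜} {L : 𝕜 × 𝕜 →L[𝕜] 𝕜} {a : 𝕜}
    (hdiag : ∀ t, f (t, t) = t) (hL : HasFDerivAt f L (a, a)) : L (1, 1) = 1 := by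
  have hcomp := hL.comp_hasDerivAt (f := fun t => (t, t)) a
    ((hasDerivAt_id' a).prodMk (hasDerivAt_id' a))
  simp only [Function.comp_def, hdiag] at hcomp
  exact hcomp.unique (hasDerivAt_id a)

theorem ContinuousLinearMap.two_mul_apply_of_apply_swap {L : 𝕜 × 𝕜 →L[𝕜] 𝕜}
    (hswap : ∀ v, L v.swap = L v) (u v : 𝕜) : 2 * L (u, v) = (u + v) * L (1, 1) := by
  have hdecomp : ∀ u v : 𝕜, L (u, v) = u * L (1, 0) + v * L (0, 1) := fun u v => by
    rw [show ((u, v) : 𝕜 × 𝕜) = u • (1, 0) + v • (0, 1) by simp, map_add, map_smul, map_smul,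
      smul_eq_mul, smul_eq_mul]
  have h10 : L (0, 1) = L (1, 0) := hswap (1, 0)
  rw [hdecomp u v, hdecomp 1 1, h10]
  ring

end Derivative

theorem HasDerivAt.tendsto_mul_sub_inv_atTop {g : ℝ → ℝ} {g' : ℝ} (hg : HasDerivAt g g' 0) :
    Tendsto (fun x => x * (g x⁻¹ - g 0)) atTop (𝓝 g') := by
  have := hg.tendsto_slope_zero_right.comp tendsto_inv_atTop_nhdsGT_zero
  simpa [Function.comp_def] using this

theorem D2_limit (N : ℝ → ℝ → ℝ)
    (hmean : ∀ a b : ℝ, min a b ≤ N a b ∧ N a b ≤ max a b)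
    (hsymm : ∀ a b : ℝ, N a b = N b a)
    (hhom : ∀ t > (0:ℝ), ∀ a b : ℝ, N (t * a) (t * b) = t * N a b)
    (hdiff : Differentiable ℝ (fun p : ℝ × ℝ => N p.1 p.2))
    (σ σs : ℝ) (hσ : σ + σs = 1) :
    Tendsto (fun x : ℝ => N (x + σ) (x + σs) - (x + 1 / 2)) atTop (nhds 0) := by
  have hdiag : ∀ t, N t t = t := fun t =>
    le_antisymm (by simpa using (hmean t t).2) (by simpa using (hmean t t).1)
  obtain ⟨L, hL⟩ : ∃ L, HasFDerivAt (fun p : ℝ × ℝ => N p.1 p.2) L (1, 1) :=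
    ⟨_, (hdiff (1, 1)).hasFDerivAt⟩
  have hLσ : L (σ, σs) = 1 / 2 := by
    have h := L.two_mul_apply_of_apply_swap (hL.apply_swap_of_comp_swap (fun p => hsymm _ _)) σ σs
    rw [hL.apply_one_one_of_diag_eq_id hdiag, hσ] at h
    linarith
  set g : ℝ → ℝ := fun t => N (1 + σ * t) (1 + σs * t)
  have hg : HasDerivAt g (1 / 2) 0 := by
    have hline : HasDerivAt (fun t : ℝ => (1 + σ * t, 1 + σs * t)) (σ, σs) 0 := by
      simpa using (((hasDerivAt_id' 0).const_mul σ).const_add 1).prodMk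
        (((hasDerivAt_id' 0).const_mul σs).const_add 1)
    rw [← hLσ]
    exact (by simpa using hL : HasFDerivAt _ L (1 + σ * 0, 1 + σs * 0)).comp_hasDerivAt 0 hline
  have hg0 : g 0 = 1 := by simp [g, hdiag]
  have hlim := hg.tendsto_mul_sub_inv_atTop.sub_const (1 / 2)
  rw [sub_self] at hlim
  refine hlim.congr' ?_
  filter_upwards [eventually_gt_atTop 0] with x hx
  have hscale := hhom x hx (1 + σ * x⁻¹) (1 + σs * x⁻¹)
  rw [mul_add, mul_add, mul_one, mul_left_comm, mul_left_comm x σs, mul_inv_cancel₀ hx.ne',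
    mul_one, mul_one] at hscale
  simp only [g, hg0, hscale]
  ring
end

section
/- Let M be a symmetric, homogeneous, differentiable bivariate mean on (0,∞)², N a symmetric, homogeneous, differentiable bivariate mean on ℝ², and θ+θ*=σ+σ*=1 fixed reals. Then lim_{x→∞} [ ln Γ(x+1) − (1/2)ln(2π) − (x+1/2)·ln M(x+θ, x+θ*) + N(x+σ, x+σ*) ] = 0. -/
/-!
Write `y = x + 1/2`. Stirling's formula for the factorial transfers to real arguments because
`log Γ` is convex, so between consecutive integers its increments are squeezed between
`t log n` and `t log (n + 1)`. By homogeneity `K (x + α) (x + β) = x K (1 + α/x, 1 + β/x)`, and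
symmetry forces both partial derivatives of a mean at `(1, 1)` to be `1/2`; hence
`M (x + θ) (x + θ*)` and `N (x + σ) (x + σ*)` are both `y + o(1)`. Finally
`y (log y - log M) → 0` because `log z` lies between `1 - 1/z` and `z - 1`.
-/

open Filter Real Set Topology

theorem tendsto_mul_log_sub_log {α : Type*} {l : Filter α} {f g : α → ℝ} {c : ℝ}
    (hg : Tendsto g l atTop) (hgf : Tendsto (fun a => g a - f a) l (𝓝 c)) :
    Tendsto (fun a => g a * (log (g a) - log (f a))) l (𝓝 c) := by
  have hf : Tendsto f l atTop := by
    simpa using hg.atTop_add hgf.neg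
  have hratio : Tendsto (fun a => g a / f a) l (𝓝 1) := by
    have := (hgf.div_atTop hf).const_add 1
    rw [add_zero] at this
    refine this.congr' ?_
    filter_upwards [hf.eventually_gt_atTop 0] with a ha
    field_simp
    ring
  refine tendsto_of_tendsto_of_tendsto_of_le_of_le' hgf (by simpa using hgf.mul hratio) ?_ ?_
  all_goals filter_upwards [hf.eventually_gt_atTop 0, hg.eventually_gt_atTop 0] with a hfa hga
  all_goals rw [← log_div hga.ne' hfa.ne']
  · have := one_sub_inv_le_log_of_pos (div_pos hga hfa)
    rw [inv_div] at this
    calc g a - f a = g a * (1 - f a / g a) := by field_simp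
      _ ≤ _ := mul_le_mul_of_nonneg_left this hga.le
  · calc g a * log (g a / f a) ≤ g a * (g a / f a - 1) :=
          mul_le_mul_of_nonneg_left (log_le_sub_one_of_pos (div_pos hga hfa)) hga.le
      _ = (g a - f a) * (g a / f a) := by field_simp

theorem tendsto_of_tendsto_natCast_of_abs_sub_le {u : ℝ → ℝ} {ε : ℕ → ℝ} {L : ℝ}
    (hu : Tendsto (fun n : ℕ => u n) atTop (𝓝 L)) (hε : Tendsto ε atTop (𝓝 0))
    (hclose : ∀ᶠ n : ℕ in atTop, ∀ t ∈ Icc (0 : ℝ) 1, |u (n + t) - u n| ≤ ε n) :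
    Tendsto u atTop (𝓝 L) := by
  have hfloor := tendsto_nat_floor_atTop (α := ℝ)
  have hdev : Tendsto (fun x : ℝ => u x - u ⌊x⌋₊) atTop (𝓝 0) := by
    refine squeeze_zero_norm' ?_ (hε.comp hfloor)
    filter_upwards [hfloor.eventually hclose, eventually_ge_atTop 0] with x hx hx0
    have ht : x - ⌊x⌋₊ ∈ Icc (0 : ℝ) 1 :=
      ⟨sub_nonneg.2 (Nat.floor_le hx0), by linarith [Nat.lt_floor_add_one x]⟩
    simpa using hx _ ht
  simpa using (hu.comp hfloor).add hdev

theorem tendsto_log_factorial_sub_mul_log :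
    Tendsto (fun n : ℕ => log n.factorial - (n + 1 / 2) * log n + n) atTop
      (𝓝 (1 / 2 * log (2 * π))) := by
  have hlim : Tendsto (fun n : ℕ => log (Stirling.stirlingSeq n) + 1 / 2 * log 2) atTop
      (𝓝 (log √π + 1 / 2 * log 2)) :=
    (((continuousAt_log (by positivity)).tendsto).comp
      Stirling.tendsto_stirlingSeq_sqrt_pi).add_const _
  rw [show log √π + 1 / 2 * log 2 = 1 / 2 * log (2 * π) by
    rw [log_sqrt pi_pos.le, log_mul two_ne_zero pi_ne_zero]; ring] at hlim
  refine hlim.congr' ?_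
  filter_upwards [eventually_gt_atTop 0] with n hn
  have hn : (n : ℝ) ≠ 0 := by positivity
  rw [Stirling.log_stirlingSeq_formula, log_mul two_ne_zero hn, log_div hn (exp_ne_zero 1),
    log_exp]
  ring

theorem log_comp_Gamma_add_one {y : ℝ} (hy : 0 < y) :
    (log ∘ Gamma) (y + 1) = (log ∘ Gamma) y + log y := by
  simp only [Function.comp_apply]
  rw [Gamma_add_one hy.ne', log_mul hy.ne' (Gamma_pos_of_pos hy).ne', add_comm]

theorem mul_log_le_log_Gamma_add_sub {n : ℕ} (hn : n ≠ 0) {t : ℝ} (ht : 0 ≤ t) :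
    t * log n ≤ log (Gamma (n + t + 1)) - log (Gamma (n + 1)) := by
  rcases ht.eq_or_lt with rfl | ht
  · simp
  have := BohrMollerup.f_add_nat_ge convexOn_log_Gamma log_comp_Gamma_add_one
    (show 2 ≤ n + 1 by omega) ht
  simp only [Function.comp_apply] at this
  push_cast at this
  rw [add_sub_cancel_right, add_right_comm] at this
  linarith

theorem log_Gamma_add_sub_le_mul_log {n : ℕ} {t : ℝ} (ht₀ : 0 ≤ t) (ht₁ : t ≤ 1) :
    log (Gamma (n + t + 1)) - log (Gamma (n + 1)) ≤ t * log (n + 1) := by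
  rcases ht₀.eq_or_lt with rfl | ht₀
  · simp
  have := BohrMollerup.f_add_nat_le convexOn_log_Gamma log_comp_Gamma_add_one
    (Nat.succ_ne_zero n) ht₀ ht₁
  simp only [Function.comp_apply] at this
  push_cast at this
  rw [add_right_comm] at this
  linarith

theorem sub_mul_log_le_mul_log_sub {u v : ℝ} (hu : 0 < u) (huv : u ≤ v) :
    (v - u) * log u ≤ (v * log v - v) - (u * log u - u) := by
  have hv := hu.trans_le huv
  have := mul_le_mul_of_nonneg_left (log_le_sub_one_of_pos (div_pos hu hv)) hv.le
  rw [log_div hu.ne' hv.ne', mul_sub, mul_sub, mul_div_cancel₀ _ hv.ne'] at this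
  linarith

theorem mul_log_sub_le_sub_mul_log {u v : ℝ} (hu : 0 < u) (huv : u ≤ v) :
    (v * log v - v) - (u * log u - u) ≤ (v - u) * log v := by
  have hv := hu.trans_le huv
  have := mul_le_mul_of_nonneg_left (log_le_sub_one_of_pos (div_pos hv hu)) hu.le
  rw [log_div hv.ne' hu.ne', mul_sub, mul_sub, mul_div_cancel₀ _ hu.ne'] at this
  linarith

theorem tendsto_log_Gamma_add_one_sub_mul_log :
    Tendsto (fun x : ℝ => log (Gamma (x + 1)) - (x + 1 / 2) * log x + x) atTop
      (𝓝 (1 / 2 * log (2 * π))) := by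
  refine tendsto_of_tendsto_natCast_of_abs_sub_le
    (ε := fun n => 2 * (log (n + 1) - log n)) ?_ ?_ ?_
  · simpa only [Gamma_nat_eq_factorial] using tendsto_log_factorial_sub_mul_log
  · simpa using tendsto_log_nat_add_one_sub_log.const_mul 2
  filter_upwards [eventually_ne_atTop 0] with n hn t ⟨ht₀, ht₁⟩
  have hn' : (0 : ℝ) < n := by positivity
  have hx : (n : ℝ) ≤ n + t := le_add_of_nonneg_right ht₀
  have hΓ₀ := mul_log_le_log_Gamma_add_sub hn ht₀
  have hΓ₁ := log_Gamma_add_sub_le_mul_log (n := n) ht₀ ht₁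
  have hφ₀ := sub_mul_log_le_mul_log_sub hn' hx
  have hφ₁ := mul_log_sub_le_sub_mul_log hn' hx
  have hlog₀ : log n ≤ log (n + t) := log_le_log hn' hx
  have hlog₁ : log (n + t) ≤ log (n + 1) := log_le_log (by positivity) (by linarith)
  have htlog := mul_le_mul_of_nonneg_left hlog₁ ht₀
  have htD : t * (log (n + 1) - log n) ≤ log (n + 1) - log n :=
    mul_le_of_le_one_left (by linarith) ht₁
  rw [add_sub_cancel_left] at hφ₀ hφ₁
  rw [abs_le]
  constructor <;> linarith

theorem tendsto_log_Gamma_add_one_sub_stirling :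
    Tendsto (fun x : ℝ => log (Gamma (x + 1)) - (x + 1 / 2) * log (x + 1 / 2) + (x + 1 / 2))
      atTop (𝓝 (1 / 2 * log (2 * π))) := by
  have hshift := tendsto_mul_log_sub_log (f := fun x => x) (g := fun x => x + 1 / 2)
    (c := 1 / 2) (tendsto_atTop_add_const_right _ (1 / 2) tendsto_id) (by simp)
  have := (tendsto_log_Gamma_add_one_sub_mul_log.sub hshift).add_const (1 / 2)
  rw [sub_add_cancel] at this
  exact this.congr fun x => by ring

theorem tendsto_mul_sub_of_hasDerivAt {g : ℝ → ℝ} {d : ℝ} (hg : HasDerivAt g d 0) :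
    Tendsto (fun x : ℝ => x * (g x⁻¹ - g 0)) atTop (𝓝 d) := by
  have hinv : Tendsto (fun x : ℝ => x⁻¹) atTop (𝓝[≠] 0) :=
    tendsto_nhdsWithin_of_tendsto_nhds_of_eventually_within _ tendsto_inv_atTop_zero <| by
      filter_upwards [eventually_gt_atTop (0:ℝ)] with x hx using inv_ne_zero hx.ne'
  refine ((hasDerivAt_iff_tendsto_slope.1 hg).comp hinv).congr' ?_
  filter_upwards [eventually_gt_atTop (0:ℝ)] with x hx
  simp only [Function.comp_apply, slope_def_field, sub_zero, div_inv_eq_mul]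
  field_simp

section Mean

variable {K : ℝ → ℝ → ℝ} (hK : K 1 1 = 1)
  (hsymm : ∀ a > (0:ℝ), ∀ b > (0:ℝ), K a b = K b a)
  (hhom : ∀ t > (0:ℝ), ∀ a > (0:ℝ), ∀ b > (0:ℝ), K (t * a) (t * b) = t * K a b)
include hK hsymm hhom

theorem hasFDerivAt_apply_eq_add_div_two {L : ℝ × ℝ →L[ℝ] ℝ}
    (hL : HasFDerivAt (fun p : ℝ × ℝ => K p.1 p.2) L (1, 1)) (a b : ℝ) :
    L (a, b) = (a + b) / 2 := by
  have hdiag : L (1, 1) = 1 := by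
    have hcurve := hL.comp_hasDerivAt (x := (1 : ℝ)) (f := fun t : ℝ => (t, t))
      ((hasDerivAt_id 1).prodMk (hasDerivAt_id 1))
    refine hcurve.unique ((hasDerivAt_id 1).congr_of_eventuallyEq ?_)
    filter_upwards [Ioi_mem_nhds one_pos] with t ht
    simpa [hK] using hhom t ht 1 one_pos 1 one_pos
  have hswap : L (0, 1) = L (1, 0) := by
    let e : ℝ × ℝ →L[ℝ] ℝ × ℝ :=
      (ContinuousLinearMap.snd ℝ ℝ ℝ).prod (ContinuousLinearMap.fst ℝ ℝ ℝ)
    have hLe : HasFDerivAt (fun p : ℝ × ℝ => K p.1 p.2) (L.comp e) (1, 1) := by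
      refine (hL.comp (1, 1) e.hasFDerivAt).congr_of_eventuallyEq ?_
      filter_upwards [(isOpen_Ioi.prod isOpen_Ioi).mem_nhds
        (show ((1 : ℝ), (1 : ℝ)) ∈ Ioi 0 ×ˢ Ioi 0 by simp)] with p hp
      exact hsymm p.1 hp.1 p.2 hp.2
    simpa [e] using (congrArg (fun L' : ℝ × ℝ →L[ℝ] ℝ => L' (1, 0)) (hL.unique hLe)).symm
  have hab : ((a, b) : ℝ × ℝ) = a • (1, 0) + b • (0, 1) := by simp
  have h11 : ((1, 1) : ℝ × ℝ) = (1, 0) + (0, 1) := by simp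
  rw [h11, map_add, hswap] at hdiag
  rw [hab, map_add, map_smul, map_smul, hswap, smul_eq_mul, smul_eq_mul,
    show L (1, 0) = 1 / 2 by linarith]
  ring

theorem tendsto_apply_add_sub_add_half
    (hdiff : DifferentiableAt ℝ (fun p : ℝ × ℝ => K p.1 p.2) (1, 1)) {α β : ℝ}
    (hαβ : α + β = 1) :
    Tendsto (fun x : ℝ => K (x + α) (x + β) - (x + 1 / 2)) atTop (𝓝 0) := by
  set g : ℝ → ℝ := fun u => K (1 + α * u) (1 + β * u)
  have hg : HasDerivAt g (1 / 2) 0 := by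
    have hcurve : HasDerivAt (fun u : ℝ => (1 + α * u, 1 + β * u)) (α, β) 0 :=
      (((hasDerivAt_id 0).const_mul α).const_add 1).prodMk
        (((hasDerivAt_id 0).const_mul β).const_add 1) |>.congr_deriv (by simp)
    have := hdiff.hasFDerivAt.comp_hasDerivAt_of_eq 0 hcurve (by simp)
    rwa [hasFDerivAt_apply_eq_add_div_two hK hsymm hhom hdiff.hasFDerivAt, hαβ] at this
  have hg0 : g 0 = 1 := by simp [g, hK]
  have hlim := (tendsto_mul_sub_of_hasDerivAt hg).sub_const (1 / 2)
  rw [sub_self] at hlim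
  refine hlim.congr' ?_
  filter_upwards [eventually_gt_atTop 0, eventually_gt_atTop (-α), eventually_gt_atTop (-β)]
    with x hx hxα hxβ
  have hpos : ∀ γ : ℝ, -γ < x → 0 < 1 + γ * x⁻¹ ∧ x * (1 + γ * x⁻¹) = x + γ := by
    intro γ hγ
    refine ⟨?_, by field_simp⟩
    rw [show 1 + γ * x⁻¹ = (x + γ) / x by field_simp]
    exact div_pos (by linarith) hx
  obtain ⟨hα₀, hα₁⟩ := hpos α hxα
  obtain ⟨hβ₀, hβ₁⟩ := hpos β hxβ
  have := hhom x hx _ hα₀ _ hβ₀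
  rw [hα₁, hβ₁] at this
  simp only [g, hg0, this]
  ring

end Mean

theorem gamma_asymptotic_MN (M N : ℝ → ℝ → ℝ)
    (hMmean : ∀ a > (0:ℝ), ∀ b > (0:ℝ), min a b ≤ M a b ∧ M a b ≤ max a b)
    (hMsymm : ∀ a > (0:ℝ), ∀ b > (0:ℝ), M a b = M b a)
    (hMhom : ∀ t > (0:ℝ), ∀ a > (0:ℝ), ∀ b > (0:ℝ), M (t * a) (t * b) = t * M a b)
    (hMdiff : ∀ a > (0:ℝ), ∀ b > (0:ℝ), DifferentiableAt ℝ (fun p : ℝ × ℝ => M p.1 p.2) (a, b))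
    (hNmean : ∀ a b : ℝ, min a b ≤ N a b ∧ N a b ≤ max a b)
    (hNsymm : ∀ a b : ℝ, N a b = N b a)
    (hNhom : ∀ t > (0:ℝ), ∀ a b : ℝ, N (t * a) (t * b) = t * N a b)
    (hNdiff : Differentiable ℝ (fun p : ℝ × ℝ => N p.1 p.2))
    (θ θs σ σs : ℝ) (hθ : θ + θs = 1) (hσ : σ + σs = 1) :
    Tendsto (fun x : ℝ => Real.log (Real.Gamma (x + 1)) - (1 / 2) * Real.log (2 * π)
        - (x + 1 / 2) * Real.log (M (x + θ) (x + θs)) + N (x + σ) (x + σs))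
      atTop (nhds 0) := by
  have hM11 : M 1 1 = 1 := by
    have h := hMmean 1 one_pos 1 one_pos
    rw [min_self, max_self] at h
    exact le_antisymm h.2 h.1
  have hN11 : N 1 1 = 1 := by
    have h := hNmean 1 1
    rw [min_self, max_self] at h
    exact le_antisymm h.2 h.1
  have hM := tendsto_apply_add_sub_add_half hM11 hMsymm hMhom (hMdiff 1 one_pos 1 one_pos) hθ
  have hN := tendsto_apply_add_sub_add_half hN11 (fun a _ b _ => hNsymm a b)
    (fun t ht a _ b _ => hNhom t ht a b) (hNdiff (1, 1)) hσ
  have hlog := tendsto_mul_log_sub_log (g := fun x => x + 1 / 2)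
    (tendsto_atTop_add_const_right _ (1 / 2) tendsto_id) (by simpa using hM.neg)
  have := ((tendsto_log_Gamma_add_one_sub_stirling.sub_const (1 / 2 * log (2 * π))).add
    hlog).add hN
  rw [sub_self, zero_add, add_zero] at this
  exact this.congr fun x => by ring
end

section
/- Let K be a symmetric, homogeneous, twice continuously differentiable bivariate mean on ℝ², and ε, ε* fixed reals with ε + ε* = 1. Then lim_{x→∞} ( K(x+ε, x+ε*) − (x+1/2) )·ln(x+1/2) = 0, and consequently lim_{x→∞} [ ln Γ(x+1) − (1/2)ln(2π) − K(x+ε, x+ε*)·ln(x+1/2) + (x+1/2) ] = 0. -/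
/-!
With `y = x + 1/2` and `δ = ε - 1/2`, homogeneity gives `K (y + δ) (y - δ) = y * φ (δ / y)` for
`φ h = K (1 + h) (1 - h)`. Symmetry makes `φ` even, so `φ' 0 = 0` and Taylor's theorem gives
`φ h = 1 + O(h²)`; hence `K (y + δ) (y - δ) - y = O(1 / y)`, which beats `log y`.

The second limit is then Stirling's formula in the shifted form
`log Γ(x + 1) = (x + 1/2) log (x + 1/2) - (x + 1/2) + log (2π) / 2 + o(1)`. At integers it follows
from Mathlib's `Stirling.stirlingSeq`; between consecutive integers, log-convexity of `Γ` pins the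
increment of `log Γ(x + 1)` between `t log n` and `t log (n + 1)`, while the increment of the
antiderivative `y log y - y` of `log` is pinned in the same way.
-/

open Filter Real Set Asymptotics Topology

lemma mul_log_sub_self_sub_mem_Icc {a b : ℝ} (ha : 0 < a) (hab : a ≤ b) :
    (b * log b - b) - (a * log a - a) ∈ Icc ((b - a) * log a) ((b - a) * log b) := by
  have hb : 0 < b := ha.trans_le hab
  have hlog : log (b / a) = log b - log a := log_div hb.ne' ha.ne'
  have lower := one_sub_inv_le_log_of_pos (div_pos hb ha)
  have upper := log_le_sub_one_of_pos (div_pos hb ha)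
  rw [inv_div, hlog] at lower
  rw [hlog] at upper
  constructor
  · have : b - a ≤ b * (log b - log a) := by
      have := mul_le_mul_of_nonneg_left lower hb.le
      rwa [mul_sub, mul_one, mul_div_cancel₀ _ hb.ne'] at this
    linarith
  · have : a * (log b - log a) ≤ b - a := by
      have := mul_le_mul_of_nonneg_left upper ha.le
      rwa [mul_sub_one, mul_div_cancel₀ _ ha.ne'] at this
    linarith

lemma log_Gamma_add_le {a t : ℝ} (ha : 0 < a) (ht₀ : 0 ≤ t) (ht₁ : t ≤ 1) :
    log (Gamma (a + t)) ≤ log (Gamma a) + t * log a := by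
  have hconv := convexOn_log_Gamma.2 (mem_Ioi.2 ha) (mem_Ioi.2 (by linarith : 0 < a + 1))
    (sub_nonneg.2 ht₁) ht₀ (by ring)
  simp only [Function.comp_apply, smul_eq_mul] at hconv
  rw [show (1 - t) * a + t * (a + 1) = a + t by ring, Gamma_add_one ha.ne',
    log_mul ha.ne' (Gamma_pos_of_pos ha).ne'] at hconv
  linarith

lemma le_log_Gamma_add {a t : ℝ} (ha : 0 < a) (ht : 0 ≤ t) :
    log (Gamma (a + 1)) + t * log a ≤ log (Gamma (a + 1 + t)) := by
  have h1t : 0 < 1 + t := by linarith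
  have hconv := convexOn_log_Gamma.2 (mem_Ioi.2 ha) (mem_Ioi.2 (by linarith : 0 < a + 1 + t))
    (div_nonneg ht h1t.le) (one_div_nonneg.2 h1t.le) (by field_simp; ring)
  simp only [Function.comp_apply, smul_eq_mul] at hconv
  rw [show t / (1 + t) * a + 1 / (1 + t) * (a + 1 + t) = a + 1 by field_simp; ring,
    Gamma_add_one ha.ne', log_mul ha.ne' (Gamma_pos_of_pos ha).ne'] at hconv
  rw [Gamma_add_one ha.ne', log_mul ha.ne' (Gamma_pos_of_pos ha).ne']
  rw [div_mul_eq_mul_div, one_div_mul_eq_div, ← add_div, le_div_iff₀ h1t] at hconv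
  linarith

noncomputable def stirlingRemainder (x : ℝ) : ℝ :=
  log (Gamma (x + 1)) - ((x + 1 / 2) * log (x + 1 / 2) - (x + 1 / 2)) - log (2 * π) / 2

lemma abs_stirlingRemainder_add_sub_le {a t : ℝ} (ha : 0 < a) (ht₀ : 0 ≤ t) (ht₁ : t ≤ 1) :
    |stirlingRemainder (a + t) - stirlingRemainder a| ≤ log (a + 2) - log a := by
  have hΓ_le : log (Gamma (a + 1 + t)) ≤ log (Gamma (a + 1)) + t * log (a + 1) :=
    log_Gamma_add_le (by linarith) ht₀ ht₁
  have le_hΓ : log (Gamma (a + 1)) + t * log a ≤ log (Gamma (a + 1 + t)) := le_log_Gamma_add ha ht₀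
  obtain ⟨le_hL, hL_le⟩ := mul_log_sub_self_sub_mem_Icc (a := a + 1 / 2) (b := a + t + 1 / 2)
    (by linarith) (by linarith)
  have hlog₁ : t * log a ≤ t * log (a + 1 / 2) :=
    mul_le_mul_of_nonneg_left (log_le_log (by linarith) (by linarith)) ht₀
  have hlog₂ : t * log (a + 1) ≤ t * log (a + 2) :=
    mul_le_mul_of_nonneg_left (log_le_log (by linarith) (by linarith)) ht₀
  have hlog₃ : t * log (a + t + 1 / 2) ≤ t * log (a + 2) :=
    mul_le_mul_of_nonneg_left (log_le_log (by linarith) (by linarith)) ht₀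
  have hD : t * (log (a + 2) - log a) ≤ log (a + 2) - log a :=
    mul_le_of_le_one_left (sub_nonneg.2 (log_le_log ha (by linarith))) ht₁
  rw [show a + t + 1 / 2 - (a + 1 / 2) = t by ring] at le_hL hL_le
  rw [show a + 1 + t = a + t + 1 by ring] at hΓ_le le_hΓ
  unfold stirlingRemainder
  rw [abs_le]
  constructor <;> linarith

lemma stirlingRemainder_natCast {n : ℕ} (hn : n ≠ 0) :
    stirlingRemainder n = (log (Stirling.stirlingSeq n) - log √π) -
      (((n + 1 / 2) * log (n + 1 / 2) - (n + 1 / 2)) - (n * log n - n) - log n / 2) := by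
  have hn₀ : (0 : ℝ) < n := by positivity
  rw [stirlingRemainder, Stirling.log_stirlingSeq_formula, log_sqrt pi_pos.le,
    log_mul two_ne_zero pi_pos.ne', log_mul two_ne_zero hn₀.ne', log_div hn₀.ne' (exp_ne_zero 1),
    log_exp, Gamma_nat_eq_factorial]
  ring

lemma tendsto_stirlingRemainder_natCast :
    Tendsto (fun n : ℕ => stirlingRemainder n) atTop (𝓝 0) := by
  have hseq : Tendsto (fun n => log (Stirling.stirlingSeq n) - log √π) atTop (𝓝 0) := by
    rw [tendsto_sub_nhds_zero_iff]
    exact ((continuousAt_log (by positivity)).tendsto).comp Stirling.tendsto_stirlingSeq_sqrt_pi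
  have hgap : Tendsto (fun n : ℕ => ((n + 1 / 2) * log (n + 1 / 2) - (n + 1 / 2)) -
      (n * log n - n) - log n / 2) atTop (𝓝 0) := by
    have hlog := ((tendsto_log_comp_add_sub_log (1 / 2)).comp tendsto_natCast_atTop_atTop).const_mul
      (1 / 2)
    rw [mul_zero] at hlog
    have hincr (n : ℕ) (hn : n ≠ 0) := mul_log_sub_self_sub_mem_Icc (a := n) (b := n + 1 / 2)
      (by positivity) (by linarith)
    refine squeeze_zero' ((eventually_ne_atTop 0).mono fun n hn => ?_)
      ((eventually_ne_atTop 0).mono fun n hn => ?_) hlog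
    · linarith [(hincr n hn).1]
    · simp only [Function.comp_apply]
      linarith [(hincr n hn).2]
  simpa using (hseq.sub hgap).congr'
    ((eventually_ne_atTop 0).mono fun n hn => (stirlingRemainder_natCast hn).symm)

lemma tendsto_stirlingRemainder : Tendsto stirlingRemainder atTop (𝓝 0) := by
  have hbound : Tendsto (fun x : ℝ => |stirlingRemainder ⌊x⌋₊| + (log (⌊x⌋₊ + 2) - log ⌊x⌋₊))
      atTop (𝓝 0) := by
    simpa [Function.comp_def] using (tendsto_stirlingRemainder_natCast.abs.add
      ((tendsto_log_comp_add_sub_log 2).comp tendsto_natCast_atTop_atTop)).comp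
      tendsto_nat_floor_atTop
  refine squeeze_zero_norm' ?_ hbound
  filter_upwards [eventually_ge_atTop 1] with x hx
  have hfloor : (0 : ℝ) < ⌊x⌋₊ := Nat.cast_pos.2 (Nat.floor_pos.2 hx)
  have hosc := abs_stirlingRemainder_add_sub_le hfloor (sub_nonneg.2 (Nat.floor_le (by linarith)))
    (by linarith [Nat.lt_floor_add_one x])
  rw [add_sub_cancel] at hosc
  rw [norm_eq_abs]
  linarith [abs_sub_abs_le_abs_sub (stirlingRemainder x) (stirlingRemainder ⌊x⌋₊)]

lemma Function.Even.deriv_zero {E : Type*} [NormedAddCommGroup E] [NormedSpace ℝ E] {f : ℝ → E}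
    (hf : f.Even) : deriv f 0 = 0 := by
  have h := deriv_comp_neg f 0
  rw [show (fun x => f (-x)) = f from funext hf, neg_zero] at h
  refine (smul_eq_zero.1 (?_ : (2 : ℝ) • deriv f 0 = 0)).resolve_left two_ne_zero
  rw [two_smul]
  nth_rw 1 [h]
  exact neg_add_cancel _

lemma isBigO_sub_sq_of_deriv_eq_zero {E : Type*} [NormedAddCommGroup E] [NormedSpace ℝ E]
    {f : ℝ → E} {x₀ : ℝ} (hf : ContDiff ℝ 2 f) (hf' : deriv f x₀ = 0) :
    (fun x => f x - f x₀) =O[𝓝 x₀] fun x => (x - x₀) ^ 2 := by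
  have htaylor := (taylor_isLittleO_univ (x₀ := x₀) (n := 2) hf).isBigO
  have hquad : (fun x => taylorWithinEval f 2 univ x₀ x - f x₀) =O[𝓝 x₀] fun x => (x - x₀) ^ 2 := by
    simp only [taylor_within_apply, Finset.sum_range_succ, Finset.sum_range_zero,
      iteratedDerivWithin_univ, iteratedDeriv_one, iteratedDeriv_zero, hf']
    simpa using ((isBigO_const_mul_self (1 / 2 : ℝ) (fun x => (x - x₀) ^ 2) _).smul
      (isBigO_const_one ℝ (iteratedDeriv 2 f x₀) (𝓝 x₀)))
  simpa using htaylor.add hquad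

section Mean

variable {K : ℝ → ℝ → ℝ}

lemma isBigO_sq_along_antidiagonal (hsymm : ∀ a b, K a b = K b a)
    (hdiff : ContDiff ℝ 2 (fun p : ℝ × ℝ => K p.1 p.2)) :
    (fun h => K (1 + h) (1 - h) - K 1 1) =O[𝓝 0] fun h => h ^ 2 := by
  set φ : ℝ → ℝ := fun h => K (1 + h) (1 - h)
  have hφ : ContDiff ℝ 2 φ := hdiff.comp ((contDiff_const.add contDiff_id).prodMk
    (contDiff_const.sub contDiff_id))
  have heven : φ.Even := fun h => by
    simp only [φ, hsymm (1 + -h), sub_neg_eq_add, ← sub_eq_add_neg]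
  simpa [φ] using isBigO_sub_sq_of_deriv_eq_zero hφ heven.deriv_zero

lemma tendsto_apply_add_sub_sub_self_mul_log (hsymm : ∀ a b, K a b = K b a)
    (hhom : ∀ t > (0 : ℝ), ∀ a b, K (t * a) (t * b) = t * K a b)
    (hdiff : ContDiff ℝ 2 (fun p : ℝ × ℝ => K p.1 p.2)) (hK : K 1 1 = 1) (δ : ℝ) :
    Tendsto (fun y => (K (y + δ) (y - δ) - y) * log y) atTop (𝓝 0) := by
  have hscale : ∀ y > 0, K (y + δ) (y - δ) - y = y * (K (1 + δ / y) (1 - δ / y) - K 1 1) := by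
    intro y hy
    rw [hK, mul_sub_one, ← hhom y hy, mul_add, mul_sub, mul_one, mul_div_cancel₀ _ hy.ne']
  have hO : (fun y => y * (K (1 + δ / y) (1 - δ / y) - K 1 1)) =O[atTop] fun y => y⁻¹ := by
    have hδy : Tendsto (fun y : ℝ => δ / y) atTop (𝓝 0) := tendsto_const_nhds.div_atTop tendsto_id
    have := (isBigO_refl (fun y : ℝ => y) atTop).mul
      ((isBigO_sq_along_antidiagonal hsymm hdiff).comp_tendsto hδy)
    refine this.trans (IsBigO.of_bound (δ ^ 2) ?_)
    filter_upwards [eventually_gt_atTop 0] with y hy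
    rw [Function.comp_apply, show y * (δ / y) ^ 2 = δ ^ 2 * y⁻¹ by field_simp, norm_mul,
      norm_pow, norm_eq_abs δ, sq_abs]
  rw [← isLittleO_one_iff ℝ]
  refine ((hO.mul_isLittleO isLittleO_log_id_atTop).congr' ?_ ?_)
  · filter_upwards [eventually_gt_atTop 0] with y hy
    rw [hscale y hy]
  · filter_upwards [eventually_gt_atTop 0] with y hy
    simp [hy.ne']

end Mean

theorem gamma_asymptotic_K (K : ℝ → ℝ → ℝ)
    (hmean : ∀ a b : ℝ, min a b ≤ K a b ∧ K a b ≤ max a b)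
    (hsymm : ∀ a b : ℝ, K a b = K b a)
    (hhom : ∀ t > (0:ℝ), ∀ a b : ℝ, K (t * a) (t * b) = t * K a b)
    (hdiff : ContDiff ℝ 2 (fun p : ℝ × ℝ => K p.1 p.2))
    (ε εs : ℝ) (hε : ε + εs = 1) :
    Tendsto (fun x : ℝ => (K (x + ε) (x + εs) - (x + 1 / 2)) * Real.log (x + 1 / 2))
      atTop (nhds 0) ∧
    Tendsto (fun x : ℝ => Real.log (Real.Gamma (x + 1)) - (1 / 2) * Real.log (2 * π)
        - K (x + ε) (x + εs) * Real.log (x + 1 / 2) + (x + 1 / 2))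
      atTop (nhds 0) := by
  have hK : K 1 1 = 1 :=
    le_antisymm (by simpa using (hmean 1 1).2) (by simpa using (hmean 1 1).1)
  have hlog : Tendsto (fun x : ℝ => (K (x + ε) (x + εs) - (x + 1 / 2)) * log (x + 1 / 2))
      atTop (𝓝 0) := by
    have := (tendsto_apply_add_sub_sub_self_mul_log hsymm hhom hdiff hK (ε - 1 / 2)).comp
      (tendsto_atTop_add_const_right atTop (1 / 2) tendsto_id)
    convert this using 2 with x
    rw [Function.comp_apply, id, add_add_sub_cancel,
      show x + 1 / 2 - (ε - 1 / 2) = x + εs by linarith]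
  refine ⟨hlog, ?_⟩
  convert tendsto_stirlingRemainder.sub hlog using 2 with x
  · rw [stirlingRemainder]
    ring
  · simp
end

section
/- Let M be a bivariate mean on (0,∞)², n ≥ 1 an integer, and θ, σ fixed real numbers. Then lim_{x→∞} [ ψ^(n)(x+1) − (−1)^{n−1}(n−1)! / M(x+θ, x+σ)^n ] = 0. -/
open Filter Real Set

/-- The digamma function `ψ = Γ'/Γ`. -/
noncomputable def digamma (x : ℝ) : ℝ := deriv Real.Gamma x / Real.Gamma x

/-!
Convexity of `log ∘ Γ` squeezes `ψ y` between `log (y - 1)` and `log y`. Together with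
`ψ (x + N) = ψ x + ∑_{k<N} 1/(x+k)` and `H_N - log N → γ` this gives the series
`ψ x = -γ + ∑_k (1/(k+1) - 1/(x+k))` for `x > 0`. Differentiating termwise,
`ψ^(m+1) x = (-1)^m (m+1)! ∑_k (x+k)^-(m+2)`, which tends to `0` as `x → ∞` by dominated
convergence. The second term tends to `0` because `M (x+θ) (x+σ) ≥ min (x+θ) (x+σ) → ∞`.
-/

open scoped Nat Topology

local notation "γ" => Real.eulerMascheroniConstant

lemma hasDerivAt_log_Gamma {x : ℝ} (hx : 0 < x) :
    HasDerivAt (fun y => log (Gamma y)) (digamma x) x :=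
  (differentiableAt_Gamma fun m => by linarith [(Nat.cast_nonneg m : (0 : ℝ) ≤ m)]
    ).hasDerivAt.log (Gamma_pos_of_pos hx).ne'

lemma log_Gamma_add_one {x : ℝ} (hx : 0 < x) : log (Gamma (x + 1)) = log (Gamma x) + log x := by
  rw [Gamma_add_one hx.ne', log_mul hx.ne' (Gamma_pos_of_pos hx).ne', add_comm]

lemma digamma_add_one {x : ℝ} (hx : 0 < x) : digamma (x + 1) = digamma x + x⁻¹ := by
  have hshift := (hasDerivAt_log_Gamma (by linarith : 0 < x + 1)).comp_add_const x 1
  refine hshift.unique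
    (((hasDerivAt_log_Gamma hx).add (hasDerivAt_log hx.ne')).congr_of_eventuallyEq ?_)
  filter_upwards [eventually_gt_nhds hx] with y hy using log_Gamma_add_one hy

lemma digamma_add_nat {x : ℝ} (hx : 0 < x) (N : ℕ) :
    digamma (x + N) = digamma x + ∑ k ∈ Finset.range N, (x + k)⁻¹ := by
  induction N with
  | zero => simp
  | succ N ih =>
    rw [Nat.cast_succ, ← add_assoc, digamma_add_one (by positivity), ih, Finset.sum_range_succ,
      add_assoc]

lemma digamma_le_log {x : ℝ} (hx : 0 < x) : digamma x ≤ log x := by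
  have := convexOn_log_Gamma.le_slope_of_hasDerivAt (mem_Ioi.mpr hx)
    (mem_Ioi.mpr (by linarith : 0 < x + 1)) (by linarith) (hasDerivAt_log_Gamma hx)
  simpa [slope_def_field, log_Gamma_add_one hx] using this

lemma log_le_digamma_add_one {x : ℝ} (hx : 0 < x) : log x ≤ digamma (x + 1) := by
  have := convexOn_log_Gamma.slope_le_of_hasDerivAt (mem_Ioi.mpr hx)
    (mem_Ioi.mpr (by linarith : 0 < x + 1)) (by linarith) (hasDerivAt_log_Gamma (by linarith))
  simpa [slope_def_field, log_Gamma_add_one hx] using this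

lemma tendsto_log_add_sub_log (c : ℝ) :
    Tendsto (fun y => log (y + c) - log y) atTop (𝓝 0) := by
  have hlim : Tendsto (fun y => log (1 + c * y⁻¹)) atTop (𝓝 (log (1 + c * 0))) :=
    ((continuousAt_log (by norm_num)).tendsto.comp
      (tendsto_inv_atTop_zero.const_mul c |>.const_add 1))
  rw [mul_zero, add_zero, log_one] at hlim
  refine hlim.congr' ?_
  filter_upwards [eventually_gt_atTop (max 0 (-c))] with y hy
  have hy0 : 0 < y := (le_max_left _ _).trans_lt hy
  have hyc : 0 < y + c := by linarith [le_max_right 0 (-c)]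
  rw [← log_div hyc.ne' hy0.ne', add_div, div_self hy0.ne', div_eq_mul_inv]

lemma tendsto_digamma_add_nat_sub_log (x : ℝ) :
    Tendsto (fun N : ℕ => digamma (x + N) - log N) atTop (𝓝 0) := by
  have hN := tendsto_natCast_atTop_atTop (R := ℝ)
  refine tendsto_of_tendsto_of_tendsto_of_le_of_le'
    ((tendsto_log_add_sub_log (x - 1)).comp hN) ((tendsto_log_add_sub_log x).comp hN) ?_ ?_
  · filter_upwards [hN.eventually_gt_atTop (1 - x)] with N hN
    have h := log_le_digamma_add_one (by linarith : 0 < x + N - 1)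
    rw [sub_add_cancel] at h
    show log (N + (x - 1)) - log N ≤ _
    rw [show (N : ℝ) + (x - 1) = x + N - 1 by ring]
    linarith
  · filter_upwards [hN.eventually_gt_atTop (-x)] with N hN
    simpa [add_comm] using digamma_le_log (by linarith : 0 < x + N)

/-- The Hurwitz zeta value `ζ(p, x)`. -/
noncomputable def hurwitzSeries (p : ℕ) (x : ℝ) : ℝ := ∑' k : ℕ, ((x + k) ^ p)⁻¹

lemma summable_inv_add_pow {a : ℝ} (ha : 0 < a) {p : ℕ} (hp : 2 ≤ p) :
    Summable fun k : ℕ => ((a + k) ^ p)⁻¹ := by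
  refine ((summable_one_div_nat_add_rpow a p).mpr (by exact_mod_cast hp)).congr fun k => ?_
  rw [abs_of_pos (by positivity), rpow_natCast, one_div, add_comm]

lemma norm_mul_inv_add_pow_le (c : ℝ) {a y : ℝ} (ha : 0 < a) (hay : a ≤ y) (k p : ℕ) :
    ‖c * ((y + k) ^ p)⁻¹‖ ≤ |c| * ((a + k) ^ p)⁻¹ := by
  have hy : 0 < y + k := add_pos_of_pos_of_nonneg (ha.trans_le hay) k.cast_nonneg
  rw [norm_mul, norm_inv, norm_pow, Real.norm_eq_abs, Real.norm_eq_abs, abs_of_pos hy]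
  gcongr

lemma hasDerivAt_inv_add_pow (k p : ℕ) {y : ℝ} (hy : 0 < y + k) :
    HasDerivAt (fun z : ℝ => ((z + k) ^ p)⁻¹) (-p * ((y + k) ^ (p + 1))⁻¹) y := by
  have := (hasDerivAt_zpow (-(p : ℤ)) (y + k) (Or.inl hy.ne')).comp_add_const y (k : ℝ)
  rw [show -(p : ℤ) - 1 = -((p + 1 : ℕ) : ℤ) by push_cast; ring] at this
  simpa only [zpow_neg, zpow_natCast, Int.cast_neg, Int.cast_natCast] using this

lemma summable_of_hasDerivAt_inv_add_pow {g : ℕ → ℝ → ℝ} {c : ℝ} {p : ℕ}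
    (hp : 2 ≤ p)
    (hg : ∀ k, ∀ y : ℝ, 0 < y → HasDerivAt (g k) (c * ((y + k) ^ p)⁻¹) y)
    {y₀ : ℝ} (hy₀ : 0 < y₀) (hg₀ : Summable (g · y₀)) {x : ℝ} (hx : 0 < x) :
    Summable (g · x) := by
  obtain ⟨a, ha, hxa, hya⟩ : ∃ a, 0 < a ∧ a < x ∧ a < y₀ :=
    ⟨min x y₀ / 2, by positivity, by linarith [min_le_left x y₀, lt_min hx hy₀],
      by linarith [min_le_right x y₀, lt_min hx hy₀]⟩
  exact summable_of_summable_hasDerivAt_of_isPreconnected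
    ((summable_inv_add_pow ha hp).mul_left |c|) isOpen_Ioi isPreconnected_Ioi
    (fun k y hy => hg k y (ha.trans hy))
    (fun k y hy => norm_mul_inv_add_pow_le c ha (le_of_lt hy) k p) hya hg₀ hxa

lemma hasDerivAt_tsum_of_hasDerivAt_inv_add_pow {g : ℕ → ℝ → ℝ} {c : ℝ} {p : ℕ}
    (hp : 2 ≤ p)
    (hg : ∀ k, ∀ y : ℝ, 0 < y → HasDerivAt (g k) (c * ((y + k) ^ p)⁻¹) y)
    {y₀ : ℝ} (hy₀ : 0 < y₀) (hg₀ : Summable (g · y₀)) {x : ℝ} (hx : 0 < x) :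
    HasDerivAt (fun y => ∑' k, g k y) (c * hurwitzSeries p x) x := by
  obtain ⟨a, ha, hxa, hya⟩ : ∃ a, 0 < a ∧ a < x ∧ a < y₀ :=
    ⟨min x y₀ / 2, by positivity, by linarith [min_le_left x y₀, lt_min hx hy₀],
      by linarith [min_le_right x y₀, lt_min hx hy₀]⟩
  rw [hurwitzSeries, ← tsum_mul_left]
  exact hasDerivAt_tsum_of_isPreconnected ((summable_inv_add_pow ha hp).mul_left |c|)
    isOpen_Ioi isPreconnected_Ioi (fun k y hy => hg k y (ha.trans hy))
    (fun k y hy => norm_mul_inv_add_pow_le c ha (le_of_lt hy) k p) hya hg₀ hxa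

lemma hasDerivAt_hurwitzSeries {p : ℕ} (hp : 2 ≤ p) {x : ℝ} (hx : 0 < x) :
    HasDerivAt (hurwitzSeries p) (-p * hurwitzSeries (p + 1) x) x :=
  hasDerivAt_tsum_of_hasDerivAt_inv_add_pow (by omega)
    (fun k y hy => hasDerivAt_inv_add_pow k p (by positivity)) hx (summable_inv_add_pow hx hp) hx

lemma tendsto_hurwitzSeries_atTop {p : ℕ} (hp : 2 ≤ p) :
    Tendsto (hurwitzSeries p) atTop (𝓝 0) := by
  have hterm (k : ℕ) : Tendsto (fun x : ℝ => ((x + k) ^ p)⁻¹) atTop (𝓝 0) :=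
    ((tendsto_pow_atTop (by omega)).comp
      (tendsto_atTop_add_const_right _ _ tendsto_id)).inv_tendsto_atTop
  have := tendsto_tsum_of_dominated_convergence (summable_inv_add_pow one_pos hp) hterm ?_
  · unfold hurwitzSeries
    simpa using this
  filter_upwards [eventually_ge_atTop 1] with x hx k
  simpa using norm_mul_inv_add_pow_le 1 one_pos hx k p

lemma hasDerivAt_digamma_series_term (k : ℕ) {y : ℝ} (hy : 0 < y) :
    HasDerivAt (fun z : ℝ => ((k : ℝ) + 1)⁻¹ - (z + k)⁻¹) (1 * ((y + k) ^ 2)⁻¹) y := by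
  simpa using (hasDerivAt_inv_add_pow k 1 (by positivity)).const_sub ((k : ℝ) + 1)⁻¹

lemma summable_digamma_series_one :
    Summable fun k : ℕ => ((k : ℝ) + 1)⁻¹ - (1 + (k : ℝ))⁻¹ := by
  simp [add_comm]

theorem hasSum_digamma {x : ℝ} (hx : 0 < x) :
    HasSum (fun k : ℕ => ((k : ℝ) + 1)⁻¹ - (x + k)⁻¹) (digamma x + γ) := by
  have hsum := summable_of_hasDerivAt_inv_add_pow le_rfl
    (fun k y hy => hasDerivAt_digamma_series_term k hy) one_pos summable_digamma_series_one hx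
  refine hsum.hasSum_iff_tendsto_nat.mpr ?_
  have hpartial (N : ℕ) : ∑ k ∈ Finset.range N, (((k : ℝ) + 1)⁻¹ - (x + k)⁻¹)
      = digamma x + γ - ((digamma (x + N) - log N) - (harmonic N - log N - γ)) := by
    rw [Finset.sum_sub_distrib, digamma_add_nat hx, harmonic]
    push_cast
    ring
  simp_rw [hpartial]
  have hlim := (tendsto_digamma_add_nat_sub_log x).sub (tendsto_harmonic_sub_log.sub_const γ)
  simpa using tendsto_const_nhds.sub hlim

lemma hasDerivAt_digamma {x : ℝ} (hx : 0 < x) : HasDerivAt digamma (hurwitzSeries 2 x) x := by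
  have h := hasDerivAt_tsum_of_hasDerivAt_inv_add_pow le_rfl
    (fun k y hy => hasDerivAt_digamma_series_term k hy) one_pos summable_digamma_series_one hx
  rw [one_mul] at h
  refine (h.sub_const γ).congr_of_eventuallyEq ?_
  filter_upwards [eventually_gt_nhds hx] with y hy
  rw [(hasSum_digamma hy).tsum_eq, add_sub_cancel_right]

theorem iteratedDeriv_digamma (m : ℕ) {x : ℝ} (hx : 0 < x) :
    iteratedDeriv (m + 1) digamma x = (-1) ^ m * (m + 1)! * hurwitzSeries (m + 2) x := by
  induction m generalizing x with
  | zero => simpa using (hasDerivAt_digamma hx).deriv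
  | succ m ih =>
    have hEq : iteratedDeriv (m + 1) digamma =ᶠ[𝓝 x]
        fun y => (-1) ^ m * (m + 1)! * hurwitzSeries (m + 2) y := by
      filter_upwards [eventually_gt_nhds hx] with y hy using ih hy
    rw [iteratedDeriv_succ, hEq.deriv_eq,
      ((hasDerivAt_hurwitzSeries (by omega) hx).const_mul _).deriv, Nat.factorial_succ (m + 1)]
    push_cast
    ring

theorem tendsto_iteratedDeriv_digamma_atTop (m : ℕ) :
    Tendsto (iteratedDeriv (m + 1) digamma) atTop (𝓝 0) := by
  have h := (tendsto_hurwitzSeries_atTop (by omega : 2 ≤ m + 2)).const_mul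
    ((-1) ^ m * (m + 1)! : ℝ)
  rw [mul_zero] at h
  refine h.congr' ?_
  filter_upwards [eventually_gt_atTop 0] with x hx using (iteratedDeriv_digamma m hx).symm

lemma tendsto_atTop_of_min_le {M : ℝ → ℝ → ℝ}
    (hM : ∀ a > (0 : ℝ), ∀ b > (0 : ℝ), min a b ≤ M a b) (θ σ : ℝ) :
    Tendsto (fun x => M (x + θ) (x + σ)) atTop atTop := by
  refine tendsto_atTop_mono' _ ?_ (tendsto_atTop_add_const_right _ (min θ σ) tendsto_id)
  filter_upwards [eventually_gt_atTop (-θ), eventually_gt_atTop (-σ)] with x hθ hσ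
  calc x + min θ σ = min (x + θ) (x + σ) := (min_add_add_left x θ σ).symm
    _ ≤ M (x + θ) (x + σ) := hM _ (by linarith) _ (by linarith)

theorem polygamma_asymptotic (M : ℝ → ℝ → ℝ)
    (hmean : ∀ a > (0:ℝ), ∀ b > (0:ℝ), min a b ≤ M a b ∧ M a b ≤ max a b)
    (n : ℕ) (hn : 1 ≤ n) (θ σ : ℝ) :
    Tendsto (fun x : ℝ =>
        iteratedDeriv n digamma (x + 1)
          - (-1 : ℝ) ^ (n - 1) * (Nat.factorial (n - 1)) / (M (x + θ) (x + σ)) ^ n)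
      atTop (nhds 0) := by
  obtain ⟨m, rfl⟩ := Nat.exists_eq_add_of_le' hn
  have hψ := (tendsto_iteratedDeriv_digamma_atTop m).comp
    (tendsto_atTop_add_const_right _ 1 tendsto_id)
  have hM := (tendsto_pow_atTop m.succ_ne_zero).comp
    (tendsto_atTop_of_min_le (fun a ha b hb => (hmean a ha b hb).1) θ σ)
  simpa using hψ.sub (tendsto_const_nhds.div_atTop hM)
end

section
/- For all t > 0, the hyperbolic Wilker inequality holds: (t/sinh t)² + t/tanh t > 2. -/
/-!
Clearing denominators, the inequality reads `2 sinh² t < t² + t sinh t cosh t`, i.e.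
`4 (cosh u - 1) < u (u + sinh u)` with `u = 2t`. Differentiating the difference of the two
sides repeatedly gives `3 sinh u < u (2 + cosh u)`, then `2 (cosh u - 1) < u sinh u`,
then `sinh u < u cosh u`, whose difference has derivative `u sinh u > 0`. Each difference
vanishes at `0`, so positivity propagates back up the chain.
-/

open Real

theorem lt_of_hasDerivAt_pos {f f' : ℝ → ℝ} {a x : ℝ} (hf : ∀ y, HasDerivAt f (f' y) y)
    (hf' : ∀ y, a < y → 0 < f' y) (hax : a < x) : f a < f x := by
  refine strictMonoOn_of_hasDerivWithinAt_pos (convex_Ici a)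
    (fun y _ => (hf y).continuousAt.continuousWithinAt) (fun y _ => (hf y).hasDerivWithinAt)
    (fun y hy => hf' y ?_) Set.self_mem_Ici hax.le hax
  simpa using hy

namespace Real

theorem sinh_lt_mul_cosh {x : ℝ} (hx : 0 < x) : sinh x < x * cosh x := by
  have key := lt_of_hasDerivAt_pos (f := fun y => y * cosh y - sinh y)
    (fun y => (((hasDerivAt_id' y).mul (hasDerivAt_cosh y)).sub (hasDerivAt_sinh y)).congr_deriv
      (by ring : 1 * cosh y + y * sinh y - cosh y = y * sinh y))
    (fun y hy => mul_pos hy (sinh_pos_iff.2 hy)) hx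
  simp only [zero_mul, sinh_zero, sub_zero] at key
  linarith

theorem two_mul_cosh_sub_one_lt {x : ℝ} (hx : 0 < x) : 2 * (cosh x - 1) < x * sinh x := by
  have key := lt_of_hasDerivAt_pos (f := fun y => y * sinh y - 2 * (cosh y - 1))
    (fun y => (((hasDerivAt_id' y).mul (hasDerivAt_sinh y)).sub
      (((hasDerivAt_cosh y).sub_const 1).const_mul 2)).congr_deriv
      (by ring : 1 * sinh y + y * cosh y - 2 * sinh y = y * cosh y - sinh y))
    (fun y hy => sub_pos.2 (sinh_lt_mul_cosh hy)) hx
  simp only [zero_mul, cosh_zero, sub_self, mul_zero] at key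
  linarith

theorem three_mul_sinh_lt {x : ℝ} (hx : 0 < x) : 3 * sinh x < x * (2 + cosh x) := by
  have key := lt_of_hasDerivAt_pos (f := fun y => y * (2 + cosh y) - 3 * sinh y)
    (fun y => (((hasDerivAt_id' y).mul ((hasDerivAt_cosh y).const_add 2)).sub
      ((hasDerivAt_sinh y).const_mul 3)).congr_deriv
      (by ring : 1 * (2 + cosh y) + y * sinh y - 3 * cosh y = y * sinh y - 2 * (cosh y - 1)))
    (fun y hy => sub_pos.2 (two_mul_cosh_sub_one_lt hy)) hx
  simp only [zero_mul, sinh_zero, mul_zero, sub_zero] at key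
  linarith

theorem four_mul_cosh_sub_one_lt {x : ℝ} (hx : 0 < x) : 4 * (cosh x - 1) < x * (x + sinh x) := by
  have key := lt_of_hasDerivAt_pos (f := fun y => y * (y + sinh y) - 4 * (cosh y - 1))
    (fun y => (((hasDerivAt_id' y).mul ((hasDerivAt_id' y).add (hasDerivAt_sinh y))).sub
      (((hasDerivAt_cosh y).sub_const 1).const_mul 4)).congr_deriv
      (by ring : 1 * (y + sinh y) + y * (1 + cosh y) - 4 * sinh y = y * (2 + cosh y) - 3 * sinh y))
    (fun y hy => sub_pos.2 (three_mul_sinh_lt hy)) hx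
  simp only [zero_mul, cosh_zero, sub_self, mul_zero] at key
  linarith

end Real

theorem wilker_hyperbolic (t : ℝ) (ht : 0 < t) :
    2 < (t / Real.sinh t) ^ 2 + t / Real.tanh t := by
  have hs : 0 < sinh t := sinh_pos_iff.2 ht
  have key : 2 * sinh t ^ 2 < t ^ 2 + t * sinh t * cosh t := by
    have h := four_mul_cosh_sub_one_lt (mul_pos two_pos ht)
    rw [cosh_two_mul, sinh_two_mul, cosh_sq] at h
    linarith
  have hrw : (t / sinh t) ^ 2 + t / tanh t = (t ^ 2 + t * sinh t * cosh t) / sinh t ^ 2 := by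
    rw [tanh_eq_sinh_div_cosh]
    field_simp
  rw [hrw, lt_div_iff₀ (by positivity)]
  exact key
end

section
/- The function f₃(x) = ln Γ(x+1) − (1/2)ln(2π) − (x+1/2)·ln( (x+1/2)(x²+x+23/80)/(x²+x+79/240) ) + (x+1/2) is increasing and concave on (−1/2, ∞). -/
/-!
Write `f₃(x) = log Γ(x + 1) - ½ log 2π - G(x + ½)` with `G(u) = u log (u (u² + a) / (u² + b)) - u`,
`a = 3/80`, `b = 19/240`. Since `log Γ(x + 2) = log Γ(x + 1) + log (x + 1)`, the forward difference
`Δ(x) = f₃(x + 1) - f₃(x) = log (x + 1) - G(x + 3/2) + G(x + ½)` is elementary. Stirling's formula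
gives `f₃(x + n) → 0`, so `f₃(x) = -∑ₖ Δ(x + k)`, and `f₃` is strictly increasing and concave as
soon as `Δ` is strictly decreasing and convex. That follows from `Δ'' > 0` together with
`Δ'(x) → 0` as `x → ∞`.
-/

open Real Set Filter Topology
open scoped Nat

section ForwardDifference

variable {f : ℝ → ℝ} {c L : ℝ}

theorem add_natCast_mem_Ioi {x : ℝ} (hx : x ∈ Ioi c) (k : ℕ) : x + k ∈ Ioi c :=
  mem_Ioi.2 <| lt_add_of_lt_of_nonneg hx k.cast_nonneg

theorem sum_range_fwdDiff_add_nat (f : ℝ → ℝ) (x : ℝ) (N : ℕ) :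
    ∑ k ∈ Finset.range N, fwdDiff 1 f (x + k) = f (x + N) - f x := by
  simpa [fwdDiff, add_assoc] using Finset.sum_range_sub (fun k : ℕ => f (x + k)) N

theorem tendsto_sum_range_fwdDiff_add_nat {x : ℝ}
    (hf : Tendsto (fun n : ℕ => f (x + n)) atTop (𝓝 L)) :
    Tendsto (fun N => ∑ k ∈ Finset.range N, fwdDiff 1 f (x + k)) atTop (𝓝 (L - f x)) := by
  simpa only [sum_range_fwdDiff_add_nat] using hf.sub_const (f x)

theorem strictMonoOn_of_strictAntiOn_fwdDiff
    (hf : ∀ x ∈ Ioi c, Tendsto (fun n : ℕ => f (x + n)) atTop (𝓝 L))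
    (hΔ : StrictAntiOn (fwdDiff 1 f) (Ioi c)) : StrictMonoOn f (Ioi c) := by
  intro x hx y hy hxy
  have hpos (k : ℕ) : 0 < fwdDiff 1 f (x + k) - fwdDiff 1 f (y + k) :=
    sub_pos.2 <| hΔ (add_natCast_mem_Ioi hx k) (add_natCast_mem_Ioi hy k) (by linarith)
  have hlim : Tendsto
      (fun N => ∑ k ∈ Finset.range N, (fwdDiff 1 f (x + k) - fwdDiff 1 f (y + k)))
      atTop (𝓝 (f y - f x)) := by
    simpa only [Finset.sum_sub_distrib, sub_sub_sub_cancel_left] using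
      (tendsto_sum_range_fwdDiff_add_nat (hf x hx)).sub
        (tendsto_sum_range_fwdDiff_add_nat (hf y hy))
  have hle : fwdDiff 1 f (x + (0 : ℕ)) - fwdDiff 1 f (y + (0 : ℕ)) ≤ f y - f x := by
    refine ge_of_tendsto hlim ((eventually_ge_atTop 1).mono fun N hN => ?_)
    exact Finset.single_le_sum (fun k _ => (hpos k).le) (Finset.mem_range.2 hN)
  linarith [hpos 0]

theorem concaveOn_of_convexOn_fwdDiff
    (hf : ∀ x ∈ Ioi c, Tendsto (fun n : ℕ => f (x + n)) atTop (𝓝 L))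
    (hΔ : ConvexOn ℝ (Ioi c) (fwdDiff 1 f)) : ConcaveOn ℝ (Ioi c) f := by
  refine ⟨convex_Ioi c, fun x hx y hy a b ha hb hab => ?_⟩
  have hz : a • x + b • y ∈ Ioi c := convex_Ioi c hx hy ha hb hab
  have hterm (k : ℕ) : fwdDiff 1 f (a * x + b * y + k)
      ≤ a * fwdDiff 1 f (x + k) + b * fwdDiff 1 f (y + k) := by
    have hk : a * (x + k) + b * (y + k) = a * x + b * y + k := by
      linear_combination (k : ℝ) * hab
    simpa only [hk, smul_eq_mul] using
      hΔ.2 (add_natCast_mem_Ioi hx k) (add_natCast_mem_Ioi hy k) ha hb hab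
  have hlim := ((tendsto_sum_range_fwdDiff_add_nat (hf x hx)).const_mul a).add
    ((tendsto_sum_range_fwdDiff_add_nat (hf y hy)).const_mul b)
  have hle := le_of_tendsto_of_tendsto' (tendsto_sum_range_fwdDiff_add_nat (hf _ hz)) hlim
    fun N => by
      simpa only [smul_eq_mul, Finset.mul_sum, ← Finset.sum_add_distrib] using
        Finset.sum_le_sum fun k _ => hterm k
  simp only [smul_eq_mul] at hle ⊢
  linear_combination hle + L * hab

end ForwardDifference

theorem strictAntiOn_and_convexOn_of_deriv2_pos {h h' h'' : ℝ → ℝ} {c : ℝ}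
    (hh : ∀ x ∈ Ioi c, HasDerivAt h (h' x) x) (hh' : ∀ x ∈ Ioi c, HasDerivAt h' (h'' x) x)
    (hpos : ∀ x ∈ Ioi c, 0 < h'' x) (hlim : Tendsto h' atTop (𝓝 0)) :
    StrictAntiOn h (Ioi c) ∧ ConvexOn ℝ (Ioi c) h := by
  have hcont : ContinuousOn h (Ioi c) := fun x hx => (hh x hx).continuousAt.continuousWithinAt
  have hcont' : ContinuousOn h' (Ioi c) := fun x hx => (hh' x hx).continuousAt.continuousWithinAt
  have hderiv : ∀ x ∈ interior (Ioi c), HasDerivWithinAt h (h' x) (interior (Ioi c)) x := by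
    simpa only [interior_Ioi] using fun x hx => (hh x hx).hasDerivWithinAt
  have hderiv2 : ∀ x ∈ interior (Ioi c), HasDerivWithinAt h' (h'' x) (interior (Ioi c)) x := by
    simpa only [interior_Ioi] using fun x hx => (hh' x hx).hasDerivWithinAt
  have hmono : StrictMonoOn h' (Ioi c) := strictMonoOn_of_hasDerivWithinAt_pos (convex_Ioi c)
    hcont' hderiv2 (by simpa only [interior_Ioi] using hpos)
  have hneg (x : ℝ) (hx : x ∈ Ioi c) : h' x < 0 := by
    have hx1 : x + 1 ∈ Ioi c := mem_Ioi.2 (by linarith [mem_Ioi.1 hx])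
    refine (hmono hx hx1 (lt_add_one x)).trans_le (ge_of_tendsto hlim ?_)
    filter_upwards [eventually_ge_atTop (x + 1)] with y hy
    exact hmono.monotoneOn hx1 (mem_Ioi.2 (lt_of_lt_of_le hx1 hy)) hy
  exact ⟨strictAntiOn_of_hasDerivWithinAt_neg (convex_Ioi c) hcont hderiv
      (by simpa only [interior_Ioi] using hneg),
    convexOn_of_hasDerivWithinAt2_nonneg (convex_Ioi c) hcont hderiv hderiv2
      (by simpa only [interior_Ioi] using fun x hx => (hpos x hx).le)⟩

theorem tendsto_log_Gamma_add_nat_sub_log_factorial {s : ℝ} (hs : 0 < s) :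
    Tendsto (fun n : ℕ => log (Gamma (s + n + 1)) - log n ! - s * log n) atTop (𝓝 0) := by
  have hfeq {y : ℝ} (hy : 0 < y) : (log ∘ Gamma) (y + 1) = (log ∘ Gamma) y + log y := by
    rw [Function.comp_apply, Gamma_add_one hy.ne', log_mul hy.ne' (Gamma_pos_of_pos hy).ne',
      add_comm, Function.comp_apply]
  have := (tendsto_const_nhds (x := log (Gamma s))).sub (BohrMollerup.tendsto_log_gamma hs)
  rw [sub_self] at this
  refine this.congr fun n => ?_
  have hsum := BohrMollerup.f_add_nat_eq hfeq hs (n + 1)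
  rw [Function.comp_apply, Function.comp_apply] at hsum
  rw [BohrMollerup.logGammaSeq, add_assoc, ← Nat.cast_add_one, hsum]
  ring

theorem tendsto_log_factorial_sub_mul_log_add :
    Tendsto (fun n : ℕ => log n ! - (n + 1 / 2) * log n + n) atTop
      (𝓝 (1 / 2 * log (2 * π))) := by
  have := ((continuousAt_log (by positivity)).tendsto.comp
    Stirling.tendsto_stirlingSeq_sqrt_pi).add_const (1 / 2 * log 2)
  rw [log_sqrt pi_pos.le] at this
  rw [log_mul two_ne_zero pi_ne_zero,
    show 1 / 2 * (log 2 + log π) = log π / 2 + 1 / 2 * log 2 by ring]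
  refine this.congr' ?_
  filter_upwards [eventually_ge_atTop 1] with n hn
  have hn : (n : ℝ) ≠ 0 := by positivity
  rw [Function.comp_apply, Stirling.log_stirlingSeq_formula, log_mul two_ne_zero hn,
    log_div hn (exp_pos 1).ne', log_exp]
  ring

theorem tendsto_add_mul_log_sub_log_add (c : ℝ) :
    Tendsto (fun t : ℝ => (t + c) * (log t - log (t + c))) atTop (𝓝 (-c)) := by
  have hfac : Tendsto (fun t : ℝ => 1 + c / t) atTop (𝓝 1) := by
    simpa using (tendsto_const_nhds (x := (1 : ℝ))).add
      ((tendsto_const_nhds (x := c)).div_atTop tendsto_id)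
  have := ((tendsto_mul_log_one_add_div_atTop c).mul hfac).neg
  rw [mul_one] at this
  refine this.congr' ?_
  filter_upwards [eventually_gt_atTop 0, eventually_gt_atTop (-c)] with t ht htc
  rw [show 1 + c / t = (t + c) / t by field_simp, log_div (by linarith) ht.ne']
  field_simp
  ring

section StirlingTerm

variable {a b u : ℝ}

theorem tendsto_mul_log_sq_add_div_sq_add (hb : 0 ≤ b) :
    Tendsto (fun u => u * log ((u ^ 2 + a) / (u ^ 2 + b))) atTop (𝓝 0) := by
  have hden : Tendsto (fun u : ℝ => u + b / u) atTop atTop :=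
    tendsto_id.atTop_add (tendsto_const_nhds.div_atTop tendsto_id)
  have hg : Tendsto (fun u => u * ((a - b) / (u ^ 2 + b))) atTop (𝓝 0) := by
    refine ((tendsto_const_nhds (x := a - b)).div_atTop hden).congr' ?_
    filter_upwards [eventually_gt_atTop 0] with u hu
    field_simp
  refine (tendsto_mul_log_one_add_of_tendsto hg).congr' ?_
  filter_upwards [eventually_gt_atTop 0] with u hu
  congr 2
  field_simp
  ring

noncomputable def stirlingTerm (a b u : ℝ) : ℝ := u * log (u * (u ^ 2 + a) / (u ^ 2 + b)) - u

noncomputable def stirlingTermDeriv (a b u : ℝ) : ℝ :=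
  log (u * (u ^ 2 + a) / (u ^ 2 + b)) + 2 * b / (u ^ 2 + b) - 2 * a / (u ^ 2 + a)

noncomputable def stirlingTermDeriv2 (a b u : ℝ) : ℝ :=
  1 / u + 2 * u / (u ^ 2 + a) - 2 * u / (u ^ 2 + b) + 4 * a * u / (u ^ 2 + a) ^ 2
    - 4 * b * u / (u ^ 2 + b) ^ 2

theorem hasDerivAt_log_mul_sq_add_div_sq_add (ha : 0 ≤ a) (hb : 0 ≤ b) (hu : 0 < u) :
    HasDerivAt (fun v => log (v * (v ^ 2 + a) / (v ^ 2 + b)))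
      (1 / u + 2 * u / (u ^ 2 + a) - 2 * u / (u ^ 2 + b)) u := by
  have hM := (((hasDerivAt_id' u).fun_mul ((hasDerivAt_pow 2 u).add_const a)).fun_div
    ((hasDerivAt_pow 2 u).add_const b) (by positivity)).log (by positivity)
  convert hM using 1
  field_simp
  ring

theorem hasDerivAt_stirlingTerm (ha : 0 ≤ a) (hb : 0 ≤ b) (hu : 0 < u) :
    HasDerivAt (stirlingTerm a b) (stirlingTermDeriv a b u) u :=
  (((hasDerivAt_id' u).fun_mul (hasDerivAt_log_mul_sq_add_div_sq_add ha hb hu)).fun_sub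
    (hasDerivAt_id' u)).congr_deriv (by unfold stirlingTermDeriv; field_simp; ring)

theorem hasDerivAt_stirlingTermDeriv (ha : 0 ≤ a) (hb : 0 ≤ b) (hu : 0 < u) :
    HasDerivAt (stirlingTermDeriv a b) (stirlingTermDeriv2 a b u) u := by
  have hP := (hasDerivAt_pow 2 u).add_const a
  have hQ := (hasDerivAt_pow 2 u).add_const b
  exact (((hasDerivAt_log_mul_sq_add_div_sq_add ha hb hu).fun_add
    ((hasDerivAt_const u (2 * b)).fun_div hQ (by positivity))).fun_sub
    ((hasDerivAt_const u (2 * a)).fun_div hP (by positivity))).congr_deriv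
    (by unfold stirlingTermDeriv2; field_simp; ring)

theorem tendsto_stirlingTermDeriv_sub_log (ha : 0 ≤ a) (hb : 0 ≤ b) :
    Tendsto (fun u => stirlingTermDeriv a b u - log u) atTop (𝓝 0) := by
  have hlog : Tendsto (fun u => log ((u ^ 2 + a) / (u ^ 2 + b))) atTop (𝓝 0) := by
    have := tendsto_inv_atTop_zero.mul (tendsto_mul_log_sq_add_div_sq_add (a := a) hb)
    rw [zero_mul] at this
    refine this.congr' ?_
    filter_upwards [eventually_gt_atTop 0] with u hu
    field_simp
  have hfrac (c d : ℝ) : Tendsto (fun u : ℝ => c / (u ^ 2 + d)) atTop (𝓝 0) :=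
    tendsto_const_nhds.div_atTop
      (tendsto_atTop_add_const_right _ d (tendsto_pow_atTop two_ne_zero))
  have := (hlog.add (hfrac (2 * b) b)).sub (hfrac (2 * a) a)
  rw [add_zero, sub_zero] at this
  refine this.congr' ?_
  filter_upwards [eventually_gt_atTop 0] with u hu
  rw [stirlingTermDeriv, mul_div_assoc u, log_mul hu.ne' (by positivity)]
  ring

theorem tendsto_log_Gamma_sub_stirlingTerm (ha : 0 ≤ a) (hb : 0 ≤ b) {s : ℝ} (hs : 0 < s) :
    Tendsto (fun n : ℕ => log (Gamma (s + n + 1)) - stirlingTerm a b (s + n + 1 / 2)) atTop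
      (𝓝 (1 / 2 * log (2 * π))) := by
  have htop : Tendsto (fun n : ℕ => s + n + 1 / 2) atTop atTop :=
    tendsto_atTop_add_const_right _ _
      (tendsto_atTop_add_const_left _ s tendsto_natCast_atTop_atTop)
  have hWendel := tendsto_log_Gamma_add_nat_sub_log_factorial hs
  have hshift := (tendsto_add_mul_log_sub_log_add (s + 1 / 2)).comp tendsto_natCast_atTop_atTop
  have hcorr := (tendsto_mul_log_sq_add_div_sq_add (a := a) hb).comp htop
  -- `log Γ(s + n + 1) - stirlingTerm a b u` with `u = s + n + 1/2` splits into the two factorial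
  -- limits, `u (log n - log u)`, the constant `s + 1/2` and `-u log ((u² + a) / (u² + b))`.
  have := (((hWendel.add tendsto_log_factorial_sub_mul_log_add).add hshift).add_const
    (s + 1 / 2)).sub hcorr
  rw [zero_add, neg_add_cancel_right, sub_zero] at this
  refine this.congr' ?_
  filter_upwards [eventually_ge_atTop 1] with n hn
  have hn : (0 : ℝ) < n := by positivity
  have hu : (0 : ℝ) < s + n + 1 / 2 := by positivity
  rw [Function.comp_apply, Function.comp_apply, stirlingTerm, mul_div_assoc (s + n + 1 / 2),
    log_mul hu.ne' (by positivity), show (n : ℝ) + (s + 1 / 2) = s + n + 1 / 2 by ring]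
  ring

end StirlingTerm

section StirlingGap

variable {a b x : ℝ}

noncomputable def stirlingGap (a b x : ℝ) : ℝ :=
  log (x + 1) - (stirlingTerm a b (x + 3 / 2) - stirlingTerm a b (x + 1 / 2))

noncomputable def stirlingGapDeriv (a b x : ℝ) : ℝ :=
  1 / (x + 1) - (stirlingTermDeriv a b (x + 3 / 2) - stirlingTermDeriv a b (x + 1 / 2))

noncomputable def stirlingGapDeriv2 (a b x : ℝ) : ℝ :=
  -(1 / (x + 1) ^ 2) - (stirlingTermDeriv2 a b (x + 3 / 2) - stirlingTermDeriv2 a b (x + 1 / 2))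

theorem hasDerivAt_stirlingGap (ha : 0 ≤ a) (hb : 0 ≤ b) (hx : -1 / 2 < x) :
    HasDerivAt (stirlingGap a b) (stirlingGapDeriv a b x) x := by
  have hlog : HasDerivAt (fun y => log (y + 1)) (1 / (x + 1)) x := by
    simpa using ((hasDerivAt_id' x).add_const 1).log (by linarith)
  exact hlog.fun_sub
    (((hasDerivAt_stirlingTerm ha hb (by linarith)).comp_add_const x (3 / 2)).fun_sub
      ((hasDerivAt_stirlingTerm ha hb (by linarith)).comp_add_const x (1 / 2)))

theorem hasDerivAt_stirlingGapDeriv (ha : 0 ≤ a) (hb : 0 ≤ b) (hx : -1 / 2 < x) :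
    HasDerivAt (stirlingGapDeriv a b) (stirlingGapDeriv2 a b x) x := by
  have hinv : HasDerivAt (fun y => 1 / (y + 1)) (-(1 / (x + 1) ^ 2)) x :=
    ((hasDerivAt_const x (1 : ℝ)).fun_div ((hasDerivAt_id' x).add_const 1)
      (by linarith)).congr_deriv (by ring)
  exact hinv.fun_sub
    (((hasDerivAt_stirlingTermDeriv ha hb (by linarith)).comp_add_const x (3 / 2)).fun_sub
      ((hasDerivAt_stirlingTermDeriv ha hb (by linarith)).comp_add_const x (1 / 2)))

theorem tendsto_stirlingGapDeriv (ha : 0 ≤ a) (hb : 0 ≤ b) :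
    Tendsto (stirlingGapDeriv a b) atTop (𝓝 0) := by
  have hshift (d : ℝ) := (tendsto_stirlingTermDeriv_sub_log ha hb).comp
    (tendsto_atTop_add_const_right atTop d tendsto_id)
  have hinv : Tendsto (fun x : ℝ => 1 / (x + 1)) atTop (𝓝 0) :=
    tendsto_const_nhds.div_atTop (tendsto_atTop_add_const_right atTop 1 tendsto_id)
  have hlog := (tendsto_log_comp_add_sub_log 1).comp
    (tendsto_atTop_add_const_right atTop (1 / 2) tendsto_id)
  have := hinv.sub (((hshift (3 / 2)).sub (hshift (1 / 2))).add hlog)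
  rw [sub_zero, add_zero, sub_zero] at this
  refine this.congr fun x => ?_
  simp only [Function.comp_apply, id, stirlingGapDeriv]
  rw [show x + 1 / 2 + 1 = x + 3 / 2 by ring]
  ring

/-- Over the common denominator, in the variable `u = x + 1/2`, the numerator is a polynomial
with positive coefficients. -/
theorem stirlingGapDeriv2_pos (hx : -1 / 2 < x) : 0 < stirlingGapDeriv2 (3 / 80) (19 / 240) x := by
  obtain ⟨u, hu, rfl⟩ : ∃ u, 0 < u ∧ x = u - 1 / 2 := ⟨x + 1 / 2, by linarith, by ring⟩
  have key : stirlingGapDeriv2 (3 / 80) (19 / 240) (u - 1 / 2) =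
      (166825684249 / 60397977600000000 + 3972595981 / 188743680000000 * u
        + 295012866563 / 566231040000000 * u ^ 2 + 66777391051 / 14155776000000 * u ^ 3
        + 297092035417 / 9437184000000 * u ^ 4 + 20147292749 / 132710400000 * u ^ 5
        + 74296657243 / 132710400000 * u ^ 6 + 4894651067 / 3317760000 * u ^ 7
        + 34366211867 / 13271040000 * u ^ 8 + 24178957 / 8294400 * u ^ 9
        + 83674657 / 41472000 * u ^ 10 + 18029 / 23040 * u ^ 11 + 18029 / 138240 * u ^ 12)
      / (u * (u + 1) * (u + 1 / 2) ^ 2 * (u ^ 2 + 3 / 80) ^ 2 * (u ^ 2 + 19 / 240) ^ 2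
        * ((u + 1) ^ 2 + 3 / 80) ^ 2 * ((u + 1) ^ 2 + 19 / 240) ^ 2) := by
    unfold stirlingGapDeriv2 stirlingTermDeriv2
    rw [show u - 1 / 2 + 1 = u + 1 / 2 by ring, show u - 1 / 2 + 3 / 2 = u + 1 by ring,
      sub_add_cancel]
    field_simp
    ring
  rw [key]
  positivity

theorem stirlingGap_strictAntiOn_and_convexOn :
    StrictAntiOn (stirlingGap (3 / 80) (19 / 240)) (Ioi (-1 / 2)) ∧
      ConvexOn ℝ (Ioi (-1 / 2)) (stirlingGap (3 / 80) (19 / 240)) :=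
  strictAntiOn_and_convexOn_of_deriv2_pos
    (fun _ hx => hasDerivAt_stirlingGap (by norm_num) (by norm_num) hx)
    (fun _ hx => hasDerivAt_stirlingGapDeriv (by norm_num) (by norm_num) hx)
    (fun _ hx => stirlingGapDeriv2_pos hx) (tendsto_stirlingGapDeriv (by norm_num) (by norm_num))

end StirlingGap

section StirlingError

variable {a b x : ℝ}

/-- The theorem's `f₃` is `stirlingError (3/80) (19/240)`. -/
noncomputable def stirlingError (a b x : ℝ) : ℝ :=
  log (Gamma (x + 1)) - 1 / 2 * log (2 * π) - stirlingTerm a b (x + 1 / 2)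

theorem fwdDiff_stirlingError (hx : -1 < x) :
    fwdDiff 1 (stirlingError a b) x = stirlingGap a b x := by
  have hx1 : 0 < x + 1 := by linarith
  rw [fwdDiff, stirlingError, stirlingError, stirlingGap, Gamma_add_one hx1.ne',
    log_mul hx1.ne' (Gamma_pos_of_pos hx1).ne', show x + 1 + 1 / 2 = x + 3 / 2 by ring]
  ring

theorem tendsto_stirlingError_add_nat (ha : 0 ≤ a) (hb : 0 ≤ b) (hx : -1 < x) :
    Tendsto (fun n : ℕ => stirlingError a b (x + n)) atTop (𝓝 0) := by
  rw [← tendsto_add_atTop_iff_nat 1]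
  have := (tendsto_log_Gamma_sub_stirlingTerm ha hb (s := x + 1) (by linarith)).sub_const
    (1 / 2 * log (2 * π))
  rw [sub_self] at this
  refine this.congr fun n => ?_
  rw [stirlingError, Nat.cast_add_one]
  ring_nf

end StirlingError

theorem f3_increasing_concave :
    StrictMonoOn
      (fun x : ℝ => Real.log (Real.Gamma (x + 1)) - (1 / 2) * Real.log (2 * π)
        - (x + 1 / 2) * Real.log ((x + 1 / 2) * (x ^ 2 + x + 23 / 80) / (x ^ 2 + x + 79 / 240))
        + (x + 1 / 2)) (Set.Ioi (-(1:ℝ) / 2)) ∧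
    ConcaveOn ℝ (Set.Ioi (-(1:ℝ) / 2))
      (fun x : ℝ => Real.log (Real.Gamma (x + 1)) - (1 / 2) * Real.log (2 * π)
        - (x + 1 / 2) * Real.log ((x + 1 / 2) * (x ^ 2 + x + 23 / 80) / (x ^ 2 + x + 79 / 240))
        + (x + 1 / 2)) := by
  have hf (x : ℝ) : log (Gamma (x + 1)) - 1 / 2 * log (2 * π)
      - (x + 1 / 2) * log ((x + 1 / 2) * (x ^ 2 + x + 23 / 80) / (x ^ 2 + x + 79 / 240))
      + (x + 1 / 2) = stirlingError (3 / 80) (19 / 240) x := by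
    rw [stirlingError, stirlingTerm]
    ring_nf
  simp only [hf]
  have hlim (x : ℝ) (hx : x ∈ Ioi (-1 / 2)) :=
    tendsto_stirlingError_add_nat (a := 3 / 80) (b := 19 / 240) (by norm_num) (by norm_num)
      (by linarith [mem_Ioi.1 hx] : -1 < x)
  have hΔ : EqOn (stirlingGap (3 / 80) (19 / 240)) (fwdDiff 1 (stirlingError (3 / 80) (19 / 240)))
      (Ioi (-1 / 2)) := fun x hx => (fwdDiff_stirlingError (by linarith [mem_Ioi.1 hx])).symm
  obtain ⟨hanti, hconv⟩ := stirlingGap_strictAntiOn_and_convexOn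
  exact ⟨strictMonoOn_of_strictAntiOn_fwdDiff hlim (hanti.congr hΔ),
    concaveOn_of_convexOn_fwdDiff hlim (hconv.congr hΔ)⟩
end
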